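/- arXiv:1106.3112 — 5 statements merged into one kernel-verified Lean document; each statement's English description precedes it below -/
import Mathlib

section
/- Let R be a commutative Noetherian ring and let A = R[X₁, X₂, X₃, …] be the polynomial ring over R in countably infinitely many variables. If a prime ideal 𝔭 of A is generated by n elements, then the height of 𝔭 is at most n. Equivalently, in any chain of prime ideals 𝔭 = 𝔭₀ ⊇ 𝔭₁ ⊇ ⋯ ⊇ 𝔭ₙ₊₁ of A, two consecutive primes must coincide. -/
/-!
A chain of primes of length `h` ending at `𝔭` involves only finitely many polynomials: the
generators of `𝔭` and one witness for each strict inclusion. They all lie in the Noetherian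
subring `B = R[X_v | v ∈ V]` for a finite set `V`, and contracting the chain to `B` keeps it
strict. As `B` is a retract of `A`, the contraction of `𝔭` is generated by the images of the `n`
generators, so Krull's height theorem in `B` gives `h ≤ n`.
-/

open Ideal MvPolynomial

theorem MvPolynomial.exists_finset_subset_range_rename {σ R : Type*} [CommSemiring R]
    (S : Finset (MvPolynomial σ R)) :
    ∃ V : Finset σ, (S : Set (MvPolynomial σ R)) ⊆ Set.range (rename ((↑) : V → σ)) := by
  classical
  refine ⟨S.sup vars, fun p hp => ?_⟩
  rw [← AlgHom.coe_range, ← supported_eq_range_rename, SetLike.mem_coe, mem_supported]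
  exact_mod_cast Finset.le_sup (f := vars) hp

theorem Ideal.comap_span_of_leftInverse {A B : Type*} [CommSemiring A] [CommSemiring B]
    {f : B →+* A} {g : A →+* B} (hgf : Function.LeftInverse g f) {s : Set A}
    (hs : s ⊆ Set.range f) : (span s).comap f = span (g '' s) := by
  refine le_antisymm (fun b hb => ?_) (span_le.mpr ?_)
  · rw [← hgf b, ← map_span]
    exact mem_map_of_mem g hb
  · rintro _ ⟨a, ha, rfl⟩
    obtain ⟨b, rfl⟩ := hs ha
    simpa [hgf b] using subset_span ha

theorem Ideal.height_comap_span_le_card_of_leftInverse {A B : Type*} [CommRing A] [CommRing B]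
    [IsNoetherianRing B] {f : B →+* A} {g : A →+* B} (hgf : Function.LeftInverse g f)
    {s : Finset A} (hs : (s : Set A) ⊆ Set.range f) [(span (s : Set A)).IsPrime] :
    ((span (s : Set A)).comap f).height ≤ s.card := by
  classical
  have hspan : (span (s : Set A)).comap f = span ↑(s.image g) := by
    rw [comap_span_of_leftInverse hgf hs, Finset.coe_image]
  calc ((span (s : Set A)).comap f).height ≤ (s.image g).card := by
        refine height_le_card_of_mem_minimalPrimes_span_finset ?_
        rw [← hspan, minimalPrimes_eq_subsingleton_self]
        rfl
    _ ≤ s.card := by exact_mod_cast Finset.card_image_le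

theorem PrimeSpectrum.length_le_height_comap {A B : Type*} [CommRing A] [CommRing B]
    (f : B →+* A) (π : LTSeries (PrimeSpectrum A))
    (hπ : ∀ i : Fin π.length,
      ∃ b, f b ∈ (π i.succ).asIdeal ∧ f b ∉ (π i.castSucc).asIdeal) :
    π.length ≤ Order.height (comap f π.last) := by
  let ρ : LTSeries (PrimeSpectrum B) :=
    { length := π.length
      toFun := fun i => comap f (π i)
      step := fun i => by
        obtain ⟨b, hb, hb'⟩ := hπ i
        refine (asIdeal_lt_asIdeal _ _).mp (lt_of_le_of_ne (Ideal.comap_mono (π.step i).le)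
          fun h => hb' ((SetLike.ext_iff.mp h b).mpr hb)) }
  exact Order.length_le_height_last (p := ρ)

/-- Over a commutative Noetherian ring `R`, if a prime ideal
`𝔭` of `A = R[X₁, X₂, …] = MvPolynomial ℕ R` is generated by `n` elements,
then the height of `𝔭` (the sup of lengths of strictly increasing chains of
primes ending at `𝔭`) is at most `n`. -/
theorem height_le_of_span_finset (R : Type*) [CommRing R] [IsNoetherianRing R]
    (𝔭 : Ideal (MvPolynomial ℕ R)) (hp : 𝔭.IsPrime) (n : ℕ)
    (s : Finset (MvPolynomial ℕ R)) (hcard : s.card = n)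
    (hspan : Ideal.span (s : Set (MvPolynomial ℕ R)) = 𝔭) :
    Order.height (⟨𝔭, hp⟩ : PrimeSpectrum (MvPolynomial ℕ R)) ≤ (n : ℕ∞) := by
  classical
  refine Order.height_le fun π hπ => ?_
  choose w hw using fun i : Fin π.length =>
    SetLike.exists_of_lt ((PrimeSpectrum.asIdeal_lt_asIdeal _ _).mpr (π.step i))
  obtain ⟨V, hV⟩ := exists_finset_subset_range_rename (s ∪ Finset.univ.image w)
  let f := (rename ((↑) : V → ℕ) : MvPolynomial V R →ₐ[R] _).toRingHom
  have hgf : Function.LeftInverse (killCompl Subtype.val_injective) f :=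
    killCompl_rename_app _
  subst hspan hcard
  calc (π.length : ℕ∞) ≤ Order.height (PrimeSpectrum.comap f π.last) :=
        PrimeSpectrum.length_le_height_comap f π fun i => by
          obtain ⟨b, hb⟩ := hV (by simp : w i ∈ _)
          exact ⟨b, hb ▸ hw i⟩
    _ = ((span (s : Set (MvPolynomial ℕ R))).comap f).height := by
        rw [← PrimeSpectrum.height_eq_orderHeight, hπ]
        rfl
    _ ≤ s.card :=
        height_comap_span_le_card_of_leftInverse (g := (killCompl _).toRingHom) hgf
          fun a ha => hV (by simp [ha])
end

section
/- Let A be a unique factorization domain with fraction field K, and let M be a flat A-module. An element x of M ⊗_A K lies in the image of the canonical map M → M ⊗_A K (m ↦ m ⊗ 1) if and only if for every prime element q of A there exist m ∈ M and h ∈ A with q ∤ h such that h • x = m ⊗ 1 in M ⊗_A K. In other words, inside M ⊗_A K the module M equals the intersection of its localizations at all height one (equivalently, principal prime) primes. -/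
/-!
Clear denominators, `d • x = m ⊗ 1` with `d ≠ 0`, and strip the prime factors of `d` one at a
time. If `(p * a) • x = m ⊗ 1` and `h • x = m' ⊗ 1` with `p ∤ h`, then `h • m = p • a • m'` in `M`,
which embeds into `M ⊗ K` by flatness. Since `h` is a nonzero divisor on the domain `A ⧸ (p)`, it
stays one on `M ⧸ p M ≅ M ⊗ A ⧸ (p)` by flatness, so `m = p • n` and hence `a • x = n ⊗ 1`.
-/

open TensorProduct Pointwise nonZeroDivisors

theorem Prime.isSMulRegular_quotient_span_singleton {R : Type*} [CommRing R] {q h : R}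
    (hq : Prime q) (hh : ¬ q ∣ h) : IsSMulRegular (R ⧸ Ideal.span {q}) h := by
  have := (Ideal.span_singleton_prime hq.ne_zero).mpr hq
  have hne : Ideal.Quotient.mk (Ideal.span {q}) h ≠ 0 := by
    rwa [Ne, Ideal.Quotient.eq_zero_iff_mem, Ideal.mem_span_singleton]
  exact (isSMulRegular_algebraMap_iff _).mp (IsSMulRegular.of_ne_zero hne)

namespace Module.Flat

variable {R M : Type*} [CommRing R] [AddCommGroup M] [Module R M] [Module.Flat R M]

theorem isSMulRegular_quotSMulTop {q h : R} (hh : IsSMulRegular (R ⧸ Ideal.span {q}) h) :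
    IsSMulRegular (QuotSMulTop q M) h :=
  ((QuotSMulTop.equivTensorQuot q M).isSMulRegular_congr h).mpr (hh.lTensor M)

theorem exists_eq_smul_of_smul_eq_smul {q h : R} (hq : Prime q) (hh : ¬ q ∣ h) {m n : M}
    (e : h • m = q • n) : ∃ m' : M, q • m' = m := by
  have hm : m ∈ q • (⊤ : Submodule R M) :=
    mem_of_isSMulRegular_quotient_of_smul_mem
      (isSMulRegular_quotSMulTop (hq.isSMulRegular_quotient_span_singleton hh))
      (e ▸ Submodule.smul_mem_pointwise_smul n q ⊤ trivial)
  simpa using (Submodule.mem_smul_pointwise_iff_exists m q ⊤).mp hm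

end Module.Flat

namespace IsLocalizedModule

variable {A M M' : Type*} [CommRing A] [AddCommGroup M] [Module A M] [Module.Flat A M]
  [AddCommGroup M'] [Module A M'] (f : M →ₗ[A] M') [IsLocalizedModule A⁰ f]

theorem injective_of_flat : Function.Injective f :=
  (injective_iff_isRegular A⁰ f).mpr fun c ↦ Module.Flat.isSMulRegular_of_nonZeroDivisors c.2

variable [IsDomain A]

theorem smul_mem_range_of_prime_mul_smul_mem_range {x : M'} {p a h : A}
    (hp : Prime p) (hph : ¬ p ∣ h) (hh : h • x ∈ LinearMap.range f)
    (hpa : (p * a) • x ∈ LinearMap.range f) : a • x ∈ LinearMap.range f := by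
  obtain ⟨m', hm'⟩ := hh
  obtain ⟨m, hm⟩ := hpa
  have e : h • m = p • a • m' := injective_of_flat f <| by
    simp only [map_smul, hm, hm', smul_smul, mul_comm, mul_left_comm]
  obtain ⟨n, rfl⟩ := Module.Flat.exists_eq_smul_of_smul_eq_smul hp hph e
  refine ⟨n, smul_injective f ⟨p, mem_nonZeroDivisors_of_ne_zero hp.ne_zero⟩ ?_⟩
  simp only [Submonoid.mk_smul, ← map_smul, hm, smul_smul]

variable [UniqueFactorizationMonoid A]

theorem mem_range_of_smul_mem_range {x : M'}
    (hx : ∀ q : A, Prime q → ∃ (m : M) (h : A), ¬ q ∣ h ∧ h • x = f m) {d : A} (hd : d ≠ 0)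
    (hdx : d • x ∈ LinearMap.range f) : x ∈ LinearMap.range f := by
  induction d using UniqueFactorizationMonoid.induction_on_prime with
  | h₁ => exact absurd rfl hd
  | h₂ u hu =>
    obtain ⟨u, rfl⟩ := hu
    obtain ⟨m, hm⟩ := hdx
    exact ⟨(↑u⁻¹ : A) • m, by rw [map_smul, hm, smul_smul, Units.inv_mul, one_smul]⟩
  | h₃ a p ha hp ih =>
    obtain ⟨m, h, hph, hm⟩ := hx p hp
    exact ih ha (smul_mem_range_of_prime_mul_smul_mem_range f hp hph ⟨m, hm.symm⟩ hdx)

theorem mem_range_iff_forall_prime (x : M') :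
    x ∈ LinearMap.range f ↔ ∀ q : A, Prime q → ∃ (m : M) (h : A), ¬ q ∣ h ∧ h • x = f m := by
  refine ⟨fun ⟨m, hm⟩ q hq ↦ ⟨m, 1, fun h ↦ hq.not_isUnit (isUnit_of_dvd_one h), by simp [hm]⟩,
    fun hx ↦ ?_⟩
  obtain ⟨⟨m, d⟩, hd⟩ := surj A⁰ f x
  exact mem_range_of_smul_mem_range f hx (nonZeroDivisors.coe_ne_zero d) ⟨m, hd.symm⟩

end IsLocalizedModule

/-- Let `A` be a UFD with fraction field `K` and `M` a flat
`A`-module. An element `x` of `M ⊗[A] K` lies in the image of the canonical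
map `M → M ⊗[A] K`, `m ↦ m ⊗ 1`, iff for every prime element `q` of `A` there
exist `m ∈ M` and `h ∈ A` with `q ∤ h` such that `h • x = m ⊗ 1`; i.e. inside
`M ⊗[A] K` the module `M` is the intersection of its localizations at all
principal (height one) primes. -/
theorem mem_range_iff_local_at_all_primes
    (A : Type*) [CommRing A] [IsDomain A] [UniqueFactorizationMonoid A]
    (M : Type*) [AddCommGroup M] [Module A M] [Module.Flat A M]
    (x : M ⊗[A] FractionRing A) :
    (∃ m : M, m ⊗ₜ[A] (1 : FractionRing A) = x) ↔
      ∀ q : A, Prime q →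
        ∃ (m : M) (h : A), ¬ q ∣ h ∧ h • x = m ⊗ₜ[A] (1 : FractionRing A) := by
  exact IsLocalizedModule.mem_range_iff_forall_prime
    ((TensorProduct.comm A (FractionRing A) M).toLinearMap ∘ₗ TensorProduct.mk A _ M 1) x
end

section
/- Let A be a unique factorization domain with fraction field K, let M be a flat A-module, and let N be any A-module. Suppose f : N → M ⊗_A K is an A-linear map such that for every prime element q of A and every n ∈ N there exist m ∈ M and h ∈ A with q ∤ h and h • f(n) = m ⊗ 1. Then there exists a unique A-linear map g : N → M such that f(n) = g(n) ⊗ 1 for all n ∈ N. -/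
open TensorProduct

-- Lemma 1: on a flat module over a domain, scalar multiplication by a nonzero
-- element is injective.
lemma flat_smul_injective {R : Type*} [CommRing R] [IsDomain R]
    {M : Type*} [AddCommGroup M] [Module R M] [Module.Flat R M]
    {a : R} (ha : a ≠ 0) {x y : M} (hxy : a • x = a • y) : x = y := by
  have hL : Function.Injective (LinearMap.lsmul R R a) := by
    intro u v huv
    simp only [LinearMap.lsmul_apply, smul_eq_mul] at huv
    exact mul_left_cancel₀ ha huv
  have hinj := Module.Flat.lTensor_preserves_injective_linearMap (M := M)
    (LinearMap.lsmul R R a) hL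
  have key : ∀ z : M, (LinearMap.lTensor M (LinearMap.lsmul R R a))
      ((TensorProduct.rid R M).symm z) = (TensorProduct.rid R M).symm (a • z) := by
    intro z
    simp only [TensorProduct.rid_symm_apply, LinearMap.lTensor_tmul,
      LinearMap.lsmul_apply, smul_eq_mul, mul_one]
    rw [TensorProduct.smul_tmul, smul_eq_mul, mul_one]
  have : (TensorProduct.rid R M).symm x = (TensorProduct.rid R M).symm y := by
    apply hinj
    rw [key, key, hxy]
  exact (TensorProduct.rid R M).symm.injective this

-- Lemma 2: if `h • m₁ = p • m₂` with `p` prime not dividing `h`, then `p` divides `m₁`.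
lemma flat_prime_dvd {A : Type*} [CommRing A] [IsDomain A]
    {M : Type*} [AddCommGroup M] [Module A M] [Module.Flat A M]
    {p h : A} (hp : Prime p) (hph : ¬ p ∣ h) {m₁ m₂ : M}
    (heq : h • m₁ = p • m₂) : ∃ m₀ : M, m₁ = p • m₀ := by
  set I : Ideal A := Ideal.span {p} with hIdef
  haveI hI : I.IsPrime := (Ideal.span_singleton_prime hp.ne_zero).mpr hp
  let e := TensorProduct.quotTensorEquivQuotSMul M I
  have h1 : (Ideal.Quotient.mk I h) ⊗ₜ[A] m₁ = (0 : (A ⧸ I) ⊗[A] M) := by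
    apply e.injective
    rw [map_zero]
    show TensorProduct.quotTensorEquivQuotSMul M I _ = _
    rw [TensorProduct.quotTensorEquivQuotSMul_mk_tmul, heq]
    exact (Submodule.Quotient.mk_eq_zero _).mpr
      (Submodule.smul_mem_smul (Ideal.mem_span_singleton_self p) trivial)
  have h2 : (Ideal.Quotient.mk I h) • ((1 : A ⧸ I) ⊗ₜ[A] m₁) = (0 : (A ⧸ I) ⊗[A] M) := by
    rw [TensorProduct.smul_tmul', smul_eq_mul, mul_one]; exact h1
  have hh : (Ideal.Quotient.mk I h) ≠ 0 := by
    rw [Ne, Ideal.Quotient.eq_zero_iff_mem, Ideal.mem_span_singleton]; exact hph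
  have h3 : (1 : A ⧸ I) ⊗ₜ[A] m₁ = (0 : (A ⧸ I) ⊗[A] M) :=
    flat_smul_injective hh (by rw [h2, smul_zero])
  have h4 : m₁ ∈ I • (⊤ : Submodule A M) := by
    have h5 : e ((Ideal.Quotient.mk I 1) ⊗ₜ[A] m₁) = Submodule.Quotient.mk ((1:A) • m₁) :=
      TensorProduct.quotTensorEquivQuotSMul_mk_tmul I 1 m₁
    rw [map_one, h3, map_zero] at h5
    rw [one_smul] at h5
    exact (Submodule.Quotient.mk_eq_zero _).mp h5.symm
  have h6 : I • (⊤ : Submodule A M) ≤ LinearMap.range (LinearMap.lsmul A M p) := by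
    rw [Submodule.smul_le]
    intro r hr n _
    obtain ⟨c, rfl⟩ := Ideal.mem_span_singleton.mp hr
    exact ⟨c • n, by rw [LinearMap.lsmul_apply, smul_smul, mul_comm, mul_smul]⟩
  obtain ⟨m₀, hm₀⟩ := h6 h4
  exact ⟨m₀, by rw [← hm₀, LinearMap.lsmul_apply]⟩

/-- Let `A` be a UFD with fraction field `K`, `M` a flat
`A`-module and `N` any `A`-module. If `f : N → M ⊗[A] K` is `A`-linear and for
every prime element `q` of `A` and every `n ∈ N` there are `m ∈ M`, `h ∈ A`
with `q ∤ h` and `h • f n = m ⊗ 1`, then there is a unique `A`-linear map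
`g : N → M` with `f n = g n ⊗ 1` for all `n`. -/
theorem exists_unique_factorization_through_M
    (A : Type*) [CommRing A] [IsDomain A] [UniqueFactorizationMonoid A]
    (M : Type*) [AddCommGroup M] [Module A M] [Module.Flat A M]
    (N : Type*) [AddCommGroup N] [Module A N]
    (f : N →ₗ[A] M ⊗[A] FractionRing A)
    (hf : ∀ q : A, Prime q → ∀ n : N,
      ∃ (m : M) (h : A), ¬ q ∣ h ∧ h • f n = m ⊗ₜ[A] (1 : FractionRing A)) :
    ∃! g : N →ₗ[A] M, ∀ n : N, f n = g n ⊗ₜ[A] (1 : FractionRing A) := by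
  let φ : M →ₗ[A] M ⊗[A] FractionRing A := (TensorProduct.mk A M (FractionRing A)).flip 1
  have hφ : ∀ m : M, φ m = m ⊗ₜ[A] (1 : FractionRing A) := fun m => rfl
  -- injectivity of φ
  have hφinj : Function.Injective φ := by
    have h1 : Function.Injective
        (LinearMap.lTensor M (Algebra.linearMap A (FractionRing A))) :=
      Module.Flat.lTensor_preserves_injective_linearMap _
        (IsFractionRing.injective A (FractionRing A))
    have hkey : ∀ z : M, (LinearMap.lTensor M (Algebra.linearMap A (FractionRing A)))
        ((TensorProduct.rid A M).symm z) = φ z := by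
      intro z
      simp [TensorProduct.rid_symm_apply, hφ]
    intro x y hxy
    have : (TensorProduct.rid A M).symm x = (TensorProduct.rid A M).symm y := by
      apply h1; rw [hkey, hkey, hxy]
    exact (TensorProduct.rid A M).symm.injective this
  -- scalar multiplication by a nonzero element of A is injective on M ⊗ K
  have hsmul : ∀ (a : A), a ≠ 0 → ∀ x y : M ⊗[A] FractionRing A,
      a • x = a • y → x = y := by
    intro a ha x y hxy
    have ha' : algebraMap A (FractionRing A) a ≠ 0 :=
      (map_ne_zero_iff _ (IsFractionRing.injective A (FractionRing A))).mpr ha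
    have h2 : (algebraMap A (FractionRing A) a) • (TensorProduct.comm A M (FractionRing A) x)
        = (algebraMap A (FractionRing A) a) • (TensorProduct.comm A M (FractionRing A) y) := by
      rw [algebraMap_smul, algebraMap_smul, ← map_smul, ← map_smul, hxy]
    haveI : NoZeroSMulDivisors (FractionRing A) ((FractionRing A) ⊗[A] M) :=
      GroupWithZero.toNoZeroSMulDivisors
    exact (TensorProduct.comm A M (FractionRing A)).injective
      (smul_right_injective ((FractionRing A) ⊗[A] M) ha' h2)
  -- clearing denominators
  have hclear : ∀ x : M ⊗[A] FractionRing A, ∃ d : A, d ≠ 0 ∧ ∃ m : M, d • x = φ m := by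
    intro x
    induction x using TensorProduct.induction_on with
    | zero => exact ⟨1, one_ne_zero, 0, by simp⟩
    | tmul m k =>
        obtain ⟨⟨a, s⟩, hs⟩ := IsLocalization.surj (nonZeroDivisors A) k
        refine ⟨(s : A), nonZeroDivisors.ne_zero s.2, a • m, ?_⟩
        have h4 : (s : A) • (m ⊗ₜ[A] k) = m ⊗ₜ[A] ((s : A) • k) := by
          rw [TensorProduct.smul_tmul', TensorProduct.smul_tmul]
        have h3 : (s : A) • k = algebraMap A (FractionRing A) a := by
          rw [Algebra.smul_def, mul_comm]; exact hs
        rw [h4, hφ, h3, TensorProduct.smul_tmul, Algebra.smul_def, mul_one]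
    | add x y hx hy =>
        obtain ⟨d1, hd1, m1, h1⟩ := hx
        obtain ⟨d2, hd2, m2, h2⟩ := hy
        refine ⟨d1 * d2, mul_ne_zero hd1 hd2, d2 • m1 + d1 • m2, ?_⟩
        rw [smul_add, map_add, map_smul, map_smul, ← h1, ← h2,
          mul_comm d1 d2, mul_smul, mul_smul, smul_comm d1 d2]
  -- the key step: every f n is in the range of φ
  have key : ∀ n : N, ∃ m : M, f n = φ m := by
    intro n
    obtain ⟨d, hd, hmem⟩ := hclear (f n)
    have main : ∀ d : A, d ≠ 0 → (∃ m, d • f n = φ m) → ∃ m, f n = φ m := by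
      intro d
      induction d using UniqueFactorizationMonoid.induction_on_prime with
      | h₁ => intro h; exact absurd rfl h
      | h₂ u hu =>
          rintro _ ⟨m, hm⟩
          obtain ⟨v, rfl⟩ := hu
          refine ⟨(↑v⁻¹ : A) • m, ?_⟩
          rw [map_smul, ← hm, ← mul_smul, Units.inv_mul, one_smul]
      | h₃ a p ha hp ih =>
          rintro _ ⟨m₁, hm₁⟩
          obtain ⟨m, h, hph, hsm⟩ := hf p hp n
          have h2 : h • (a • f n) = φ (a • m) := by
            rw [smul_comm, hsm, map_smul, hφ]
          have h1 : p • (a • f n) = φ m₁ := by rw [← mul_smul]; exact hm₁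
          have h3 : φ (h • m₁) = φ (p • (a • m)) := by
            rw [map_smul, map_smul, ← h1, ← h2, smul_comm h p]
          obtain ⟨m₀, hm₀⟩ := flat_prime_dvd hp hph (hφinj h3)
          have h5 : a • f n = φ m₀ :=
            hsmul p hp.ne_zero _ _ (by rw [h1, hm₀, map_smul])
          exact ih ha ⟨m₀, h5⟩
    exact main d hd hmem
  choose g0 hg0 using key
  refine ⟨{ toFun := g0
            map_add' := fun x y => hφinj (show φ (g0 (x + y)) = φ (g0 x + g0 y) by
              rw [← hg0, map_add, hg0, hg0, map_add])
            map_smul' := fun c x => hφinj (show φ (g0 (c • x)) = φ (c • g0 x) by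
              rw [← hg0, map_smul, hg0, map_smul]) },
    fun n => hg0 n, ?_⟩
  intro g' hg'
  ext n
  exact hφinj ((hg' n).symm.trans (hg0 n))
end

section
/- Let A be a unique factorization domain, let q be a prime element of A, let h ∈ A be an element not divisible by q, and let M be a flat A-module. If m₁, m₂ ∈ M and n is a natural number such that h • m₁ = qⁿ • m₂ in M, then there exists y ∈ M with m₁ = qⁿ • y and m₂ = h • y. -/
/-!
The relation `h • m₁ = qⁿ • m₂` is a linear relation `h • m₁ - qⁿ • m₂ = 0` in `M`. By the
equational criterion for flatness it is a combination of relations `h * aⱼ = qⁿ * bⱼ` in `A`,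
with `m₁ = ∑ aⱼ • yⱼ` and `m₂ = ∑ bⱼ • yⱼ`. In `A` primality of `q` gives `aⱼ = qⁿ * cⱼ` and
`bⱼ = h * cⱼ`, so `y = ∑ cⱼ • yⱼ` works.
-/

theorem Prime.exists_eq_pow_mul_of_mul_eq_pow_mul {R : Type*} [CommMonoidWithZero R]
    [IsCancelMulZero R] {q h : R} (hq : Prime q) (hh : ¬ q ∣ h) (n : ℕ) {x y : R} (hxy : h * x = q ^ n * y) :
    ∃ c, x = q ^ n * c ∧ y = h * c := by
  obtain ⟨c, rfl⟩ := hq.pow_dvd_of_dvd_mul_left n hh ⟨y, hxy⟩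
  refine ⟨c, rfl, mul_left_cancel₀ (pow_ne_zero n hq.ne_zero) ?_⟩
  rw [← hxy, mul_left_comm]

theorem Module.Flat.exists_eq_smul_of_smul_eq_smul_s9 {R M : Type*} [CommRing R] [AddCommGroup M]
    [Module R M] [Module.Flat R M] {a b : R}
    (hab : ∀ x y : R, b * x = a * y → ∃ c, x = a * c ∧ y = b * c)
    {m₁ m₂ : M} (hm : b • m₁ = a • m₂) : ∃ y, m₁ = a • y ∧ m₂ = b • y := by
  have hrel : ∑ i, ![b, -a] i • ![m₁, m₂] i = 0 := by simp [Fin.sum_univ_two, hm]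
  obtain ⟨k, α, z, hz, hα⟩ := Module.Flat.isTrivialRelation_of_sum_smul_eq_zero hrel
  choose c hc using fun j ↦ hab (α 0 j) (α 1 j) (by
    simpa [Fin.sum_univ_two, neg_mul, add_neg_eq_zero] using hα j)
  refine ⟨∑ j, c j • z j, ?_, ?_⟩
  · simpa [Finset.smul_sum, smul_smul, (hc _).1] using hz 0
  · simpa [Finset.smul_sum, smul_smul, (hc _).2] using hz 1

theorem flat_koszul_division_general
    (A : Type*) [CommRing A] [IsDomain A]
    (M : Type*) [AddCommGroup M] [Module A M] [Module.Flat A M]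
    (q : A) (hq : Prime q) (h : A) (hh : ¬ q ∣ h)
    (m₁ m₂ : M) (n : ℕ) (heq : h • m₁ = q ^ n • m₂) :
    ∃ y : M, m₁ = q ^ n • y ∧ m₂ = h • y :=
  Module.Flat.exists_eq_smul_of_smul_eq_smul_s9
    (fun _ _ ↦ Prime.exists_eq_pow_mul_of_mul_eq_pow_mul hq hh n) heq

/-- Let `A` be a UFD, `q` a prime element of `A`, `h ∈ A` not
divisible by `q`, and `M` a flat `A`-module. If `m₁, m₂ ∈ M` and `n : ℕ`
satisfy `h • m₁ = qⁿ • m₂` in `M`, then there exists `y ∈ M` with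
`m₁ = qⁿ • y` and `m₂ = h • y`. -/
theorem flat_koszul_division
    (A : Type*) [CommRing A] [IsDomain A] [UniqueFactorizationMonoid A]
    (M : Type*) [AddCommGroup M] [Module A M] [Module.Flat A M]
    (q : A) (hq : Prime q) (h : A) (hh : ¬ q ∣ h)
    (m₁ m₂ : M) (n : ℕ) (heq : h • m₁ = q ^ n • m₂) :
    ∃ y : M, m₁ = q ^ n • y ∧ m₂ = h • y :=
  flat_koszul_division_general A M q hq h hh m₁ m₂ n heq
end

section
/- The polynomial algebra A = ℂ[X₁, X₂, X₃, …] in countably infinitely many variables over ℂ is a coherent ring: every finitely generated ideal of A is finitely presented as an A-module. -/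
/-!
Generators of a finitely generated ideal of `R[X_i : i ∈ σ]` involve only finitely many
variables `s`, so the ideal is the extension of an ideal `J` of the Noetherian ring
`R[X_i : i ∈ s]`, and `J` is finitely presented. Since `R[X_i : i ∈ σ]` is free, hence flat,
over `R[X_i : i ∈ s]`, the extension of `J` is isomorphic to its base change, and base change
preserves finite presentation.
-/

open TensorProduct

namespace Ideal

variable {R S : Type*} [CommRing R] [CommRing S] [Algebra R S] (I : Ideal R)

noncomputable def tensorMulMap : S ⊗[R] I →ₗ[S] S :=
  (AlgebraTensorModule.rid R S S).toLinearMap ∘ₗ I.subtype.baseChange S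

@[simp]
theorem tensorMulMap_tmul (s : S) (x : I) :
    I.tensorMulMap (s ⊗ₜ x) = algebraMap R S x * s := by
  simp [tensorMulMap, Algebra.smul_def]

theorem range_tensorMulMap :
    LinearMap.range (I.tensorMulMap (S := S)) = I.map (algebraMap R S) := by
  refine le_antisymm ?_ (map_le_iff_le_comap.mpr fun x hx ↦ ⟨1 ⊗ₜ ⟨x, hx⟩, by simp⟩)
  rintro _ ⟨y, rfl⟩
  induction y using TensorProduct.induction_on with
  | zero => simp
  | tmul s x => simpa using mul_mem_right s _ (mem_map_of_mem _ x.2)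
  | add y z hy hz => simpa using add_mem hy hz

theorem tensorMulMap_injective [Module.Flat R S] :
    Function.Injective (I.tensorMulMap (S := S)) := by
  refine (AlgebraTensorModule.rid R S S).injective.comp ?_
  rw [LinearMap.baseChange_eq_ltensor]
  exact Module.Flat.lTensor_preserves_injective_linearMap _ I.injective_subtype

theorem finitePresentation_map_of_flat [Module.Flat R S] [Module.FinitePresentation R I] :
    Module.FinitePresentation S (I.map (algebraMap R S)) :=
  .of_equiv ((LinearEquiv.ofInjective _ I.tensorMulMap_injective).trans
    (LinearEquiv.ofEq _ _ I.range_tensorMulMap))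

end Ideal

namespace MvPolynomial

variable {R : Type*} [CommRing R]

theorem flat_rename_inr (ρ τ : Type*) :
    (rename (R := R) (Sum.inr : τ → ρ ⊕ τ)).toRingHom.Flat := by
  have h : (rename (R := R) (Sum.inr : τ → ρ ⊕ τ)).toRingHom =
      (sumAlgEquiv R ρ τ).symm.toRingEquiv.toRingHom.comp (algebraMap _ _) := by
    ext <;> simp [algebraMap_eq]
  rw [h]
  exact (RingHom.flat_algebraMap_iff.mpr inferInstance).comp
    (RingHom.Flat.of_bijective (sumAlgEquiv R ρ τ).symm.bijective)

theorem flat_rename_of_injective {σ τ : Type*} {f : τ → σ} (hf : Function.Injective f) :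
    (rename (R := R) f).toRingHom.Flat := by
  classical
  let e : {x // x ∉ Set.range f} ⊕ τ ≃ σ := (Equiv.sumComm _ _).trans
    ((Equiv.sumCongr (Equiv.ofInjective f hf) (Equiv.refl _)).trans (Equiv.sumCompl _))
  have h : rename (R := R) f = (rename e).comp (rename Sum.inr) := by
    rw [rename_comp_rename]
    congr 1
  rw [h]
  exact (flat_rename_inr _ _).comp (RingHom.Flat.of_bijective (renameEquiv R e).bijective)

theorem exists_finset_subset_range_rename_s10 {σ : Type*} (T : Finset (MvPolynomial σ R)) :
    ∃ s : Finset σ,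
      (T : Set (MvPolynomial σ R)) ⊆ Set.range (rename (R := R) ((↑) : s → σ)) := by
  classical
  refine ⟨T.biUnion vars, fun p hp ↦ exists_rename_eq_of_vars_subset_range p _
    Subtype.val_injective ?_⟩
  rw [Subtype.range_coe_subtype]
  exact Finset.coe_subset.mpr (Finset.subset_biUnion_of_mem vars hp)

theorem ideal_finitePresentation_of_fg {σ : Type*} [IsNoetherianRing R]
    (I : Ideal (MvPolynomial σ R)) (hI : I.FG) :
    Module.FinitePresentation (MvPolynomial σ R) I := by
  obtain ⟨T, rfl⟩ := hI
  obtain ⟨s, hs⟩ := exists_finset_subset_range_rename_s10 T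
  let f := rename (R := R) ((↑) : s → σ)
  algebraize [f.toRingHom]
  have : Module.Flat (MvPolynomial s R) (MvPolynomial σ R) :=
    flat_rename_of_injective Subtype.val_injective
  have hmap : Ideal.span (T : Set (MvPolynomial σ R)) =
      (Ideal.span (f ⁻¹' ↑T)).map (algebraMap _ _) := by
    rw [Ideal.map_span]
    exact congrArg Ideal.span (Set.image_preimage_eq_of_subset hs).symm
  rw [hmap]
  have : Module.FinitePresentation (MvPolynomial s R) (Ideal.span (f ⁻¹' ↑T)) :=
    Module.finitePresentation_of_finite _ _
  exact Ideal.finitePresentation_map_of_flat _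

end MvPolynomial

/-- The polynomial algebra `A = ℂ[X₁, X₂, …] =
MvPolynomial ℕ ℂ` is a coherent ring: every finitely generated ideal of `A`
is finitely presented as an `A`-module. -/
theorem mvPolynomial_nat_complex_coherent
    (I : Ideal (MvPolynomial ℕ ℂ)) (hI : I.FG) :
    Module.FinitePresentation (MvPolynomial ℕ ℂ) I :=
  MvPolynomial.ideal_finitePresentation_of_fg I hI
end
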